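/- Let f : ℝ^d → ℝ ∪ {+∞} be a closed convex function with D := int(dom f) ≠ ∅, and let A be a closed set in ℝ^d. Then f_A(x) = f(x) for all x in the closure of D if and only if range ∇f ⊂ A, where range ∇f := {∇f(x) : x ∈ D, f differentiable at x}. In other words, F := cl(range ∇f) is the minimal closed set A such that f_A = f on cl D. -/

import Mathlib

open Filter Topology Set Pointwise
open scoped RealInnerProductSpace

noncomputable section

abbrev Euc (d : ℕ) := EuclideanSpace ℝ (Fin d)

/-- A proper lower-semicontinuous (closed) convex function with values in `ℝ ∪ {+∞}`. -/
def ClosedConvexFun {d : ℕ} (f : Euc d → EReal) : Prop :=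
  LowerSemicontinuous f ∧ (∀ x, f x ≠ ⊥) ∧ (∃ x, f x ≠ ⊤) ∧
    ∀ x y : Euc d, ∀ a b : ℝ, 0 ≤ a → 0 ≤ b → a + b = 1 →
      f (a • x + b • y) ≤ (a : EReal) * f x + (b : EReal) * f y

/-- Subdifferential of an `EReal`-valued function. -/
def subdiff {d : ℕ} (f : Euc d → EReal) (x : Euc d) : Set (Euc d) :=
  {y | ∀ z : Euc d, ((⟪z, y⟫ : ℝ) : EReal) + f x ≤ f (x + z)}

/-- Convex conjugate. -/
def fconj {d : ℕ} (f : Euc d → EReal) (y : Euc d) : EReal :=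
  ⨆ x : Euc d, ((⟪x, y⟫ : ℝ) : EReal) - f x

/-- The function `f_A(x) = sup_{y ∈ A} (⟨x,y⟩ - f*(y))`. -/
def restrSup {d : ℕ} (f : Euc d → EReal) (A : Set (Euc d)) (x : Euc d) : EReal :=
  ⨆ y ∈ A, (((⟪x, y⟫ : ℝ) : EReal) - fconj f y)

/-- `Arg_A(x) = argmax_{y ∈ A} (⟨x,y⟩ - f*(y))`. -/
def argMaxOn {d : ℕ} (f : Euc d → EReal) (A : Set (Euc d)) (x : Euc d) : Set (Euc d) :=
  {y ∈ A | ∀ z ∈ A, ((⟪x, z⟫ : ℝ) : EReal) - fconj f z ≤ ((⟪x, y⟫ : ℝ) : EReal) - fconj f y}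

/-- Linear growth: `|g x| ≤ K (1 + |x|)`. -/
def LinGrowth {k : ℕ} (g : Euc k → ℝ) : Prop :=
  ∃ K > 0, ∀ x, |g x| ≤ K * (1 + ‖x‖)

/-- `x^{-j}`: delete the `j`-th coordinate. -/
def dropCoord {d : ℕ} (j : Fin (d + 1)) (x : Euc (d + 1)) : Euc d :=
  WithLp.toLp 2 (fun i => x (j.succAbove i))

/-- The class `H^j_C`. -/
def MemH {d : ℕ} (j : Fin (d + 1)) (C : Set (Euc (d + 1))) (h : Euc (d + 1) → ℝ) : Prop :=
  ∃ g₁ g₂ : Euc d → ℝ, ConvexOn ℝ Set.univ g₁ ∧ ConvexOn ℝ Set.univ g₂ ∧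
    LinGrowth g₁ ∧ LinGrowth g₂ ∧
    (∀ x : Euc (d + 1), h x = x j + g₁ (dropCoord j x) - g₂ (dropCoord j x)) ∧
    ∀ x : Euc (d + 1), DifferentiableAt ℝ g₁ (dropCoord j x) →
      DifferentiableAt ℝ g₂ (dropCoord j x) → gradient h x ∈ C

/-- `θ^j(C) = {y / y^j : y ∈ C}`. -/
def theta {d : ℕ} (j : Fin d) (C : Set (Euc d)) : Set (Euc d) :=
  (fun y => (y j)⁻¹ • y) '' C

/-- `w` is a regular normal to `H` at `x`: `limsup_{H ∋ y → x} ⟨w, y-x⟩/|y-x| ≤ 0`. -/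
def RegNormal {d : ℕ} (H : Set (Euc d)) (x w : Euc d) : Prop :=
  ∀ ε > 0, ∃ δ > 0, ∀ y ∈ H, y ≠ x → ‖y - x‖ < δ → ⟪w, y - x⟫ ≤ ε * ‖y - x‖

/-- `w` is a normal vector to `H` at `x`. -/
def NormalVec {d : ℕ} (H : Set (Euc d)) (x w : Euc d) : Prop :=
  ∃ xs ws : ℕ → Euc d, (∀ n, xs n ∈ H ∧ RegNormal H (xs n) (ws n)) ∧
    Tendsto xs atTop (𝓝 x) ∧ Tendsto ws atTop (𝓝 w)

/-- Effective domain `{x | f x < ∞}`. -/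
def effDom {d : ℕ} (f : Euc d → EReal) : Set (Euc d) := {x | f x ≠ ⊤}

/-- Real part of an `EReal`-valued function. -/
def toRealFun {d : ℕ} (f : Euc d → EReal) : Euc d → ℝ := fun x => (f x).toReal

/-- Points of `int (dom f)` where `f` is differentiable. -/
def domGrad {d : ℕ} (f : Euc d → EReal) : Set (Euc d) :=
  {x | x ∈ interior (effDom f) ∧ DifferentiableAt ℝ (toRealFun f) x}

/-- `range ∇f`. -/
def gradRange {d : ℕ} (f : Euc d → EReal) : Set (Euc d) :=
  (fun x => gradient (toRealFun f) x) '' domGrad f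

/-- Clarke-type subdifferential `∂̄f(x)`. -/
def clarke {d : ℕ} (f : Euc d → EReal) (x : Euc d) : Set (Euc d) :=
  closure (convexHull ℝ
    {v | ∃ xs : ℕ → Euc d, (∀ n, xs n ∈ domGrad f) ∧ Tendsto xs atTop (𝓝 x) ∧
      Tendsto (fun n => gradient (toRealFun f) (xs n)) atTop (𝓝 v)})

/-- Singular set `Σ^j_A(Ψ)`. -/
def SigmaJ {d : ℕ} (Ψ : Euc d → Set (Euc d)) (j : Fin d) (A : Set (Euc d)) : Set (Euc d) :=
  {x | ∃ y₁ ∈ Ψ x ∩ A, ∃ y₂ ∈ Ψ x ∩ A, y₁ j ≠ y₂ j}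

/-- The bilinear form `S(x,y) = ∑ x^i S^{ij} y^j`. -/
def Sbil {d : ℕ} (S : Matrix (Fin d) (Fin d) ℝ) (x y : Euc d) : ℝ :=
  ∑ i, ∑ k, x i * S i k * y k

/-- Matrix acting on a vector. -/
def matVec {d : ℕ} (M : Matrix (Fin d) (Fin d) ℝ) (y : Euc d) : Euc d :=
  WithLp.toLp 2 (fun i => ∑ k, M i k * y k)

/-- Fitzpatrick function `ψ_G(x) = sup_{y ∈ G}(S(x,y) - S(y,y)/2)`. -/
def fitz {d : ℕ} (S : Matrix (Fin d) (Fin d) ℝ) (G : Set (Euc d)) (x : Euc d) : EReal :=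
  ⨆ y ∈ G, ((Sbil S x y - Sbil S y y / 2 : ℝ) : EReal)

/-- `S`-monotone set. -/
def SMonotone {d : ℕ} (S : Matrix (Fin d) (Fin d) ℝ) (G : Set (Euc d)) : Prop :=
  ∀ x ∈ G, ∀ y ∈ G, 0 ≤ Sbil S (x - y) (x - y)

/-- Projection `P_G(x) = argmin_{y ∈ G} S(x-y, x-y)`. -/
def proj {d : ℕ} (S : Matrix (Fin d) (Fin d) ℝ) (G : Set (Euc d)) (x : Euc d) : Set (Euc d) :=
  {y ∈ G | ∀ z ∈ G, Sbil S (x - y) (x - y) ≤ Sbil S (x - z) (x - z)}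

/-- `S`-regular normal vector. -/
def SRegNormal {d : ℕ} (S : Matrix (Fin d) (Fin d) ℝ) (H : Set (Euc d)) (x w : Euc d) : Prop :=
  ∀ ε > 0, ∃ δ > 0, ∀ y ∈ H, y ≠ x → ‖y - x‖ < δ → Sbil S w (y - x) ≤ ε * ‖y - x‖

/-- `S`-normal vector. -/
def SNormal {d : ℕ} (S : Matrix (Fin d) (Fin d) ℝ) (H : Set (Euc d)) (x w : Euc d) : Prop :=
  ∃ xs ws : ℕ → Euc d, (∀ n, xs n ∈ H ∧ SRegNormal S H (xs n) (ws n)) ∧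
    Tendsto xs atTop (𝓝 x) ∧ Tendsto ws atTop (𝓝 w)

/-- First-order singular set `Σ₁^j(P_G)`. -/
def Sigma1J {d : ℕ} (S : Matrix (Fin d) (Fin d) ℝ) (G : Set (Euc d)) (j : Fin d) :
    Set (Euc d) :=
  {x | ∃ y₁ ∈ proj S G x, ∃ y₂ ∈ proj S G x,
    0 < Sbil S (y₁ - y₂) (y₁ - y₂) ∧ y₁ j ≠ y₂ j}

/-- Zero-order singular set `Σ̄₀^j(P_G)`. -/
def Sigma0J {d : ℕ} (S : Matrix (Fin d) (Fin d) ℝ) (G : Set (Euc d)) (j : Fin d) :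
    Set (Euc d) :=
  {x | ∃ y₁ ∈ proj S G x, ∃ y₂ ∈ proj S G x,
    Sbil S (y₁ - y₂) (y₁ - y₂) = 0 ∧ y₁ j ≠ y₂ j}

/-- The canonical bilinear form of index `m` on `ℝ^m × ℝ^k`. -/
def Lam {m k : ℕ} (p q : Euc m × Euc k) : ℝ := ⟪p.1, q.1⟫ - ⟪p.2, q.2⟫

/-!
At a point `z` of differentiability in `D = int (dom f)`, convexity makes
`w ↦ f z + ⟪∇f z, w - z⟫` a minorant of `f`, so `f* (∇f z) = ⟪z, ∇f z⟫ - f z` and `f_A` dominates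
this tangent plane whenever `∇f z ∈ A`. By Rademacher's theorem such points are dense in `D`, and
`f` is locally Lipschitz there, so the tangent planes at `z → x` converge to `f x`: hence
`f_A = f` on `D`. Passing to `cl D` uses convexity of `f_A` along a segment from a point of `D`
together with lower semicontinuity of `f`.

Conversely, if `f_A x = f x` at a differentiability point `x`, then for every `η > 0` some
`y ∈ A` is an `η`-subgradient of `f` at `x`; testing the subgradient inequality in the direction
`y - ∇f x` shows that such `y` are close to `∇f x`, so `∇f x ∈ cl A = A`.
-/

section Calculus

variable {E : Type*} [NormedAddCommGroup E] [InnerProductSpace ℝ E] [CompleteSpace E]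

theorem ConvexOn.add_inner_gradient_le {s : Set E} {φ : E → ℝ} (hφ : ConvexOn ℝ s φ) {x y : E}
    (hx : x ∈ s) (hy : y ∈ s) (hdiff : DifferentiableAt ℝ φ x) :
    φ x + ⟪gradient φ x, y - x⟫ ≤ φ y := by
  have hline : ConvexOn ℝ (AffineMap.lineMap (k := ℝ) x y ⁻¹' s)
      (φ ∘ AffineMap.lineMap (k := ℝ) x y) :=
    hφ.comp_affineMap _
  have hderiv : HasDerivAt (φ ∘ AffineMap.lineMap (k := ℝ) x y) ⟪gradient φ x, y - x⟫ 0 := by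
    have hφ' : HasFDerivAt φ (InnerProductSpace.toDual ℝ E (gradient φ x))
        (AffineMap.lineMap (k := ℝ) x y (0 : ℝ)) := by
      simpa using hdiff.hasGradientAt.hasFDerivAt
    simpa using hφ'.comp_hasDerivAt (0 : ℝ) AffineMap.hasDerivAt_lineMap
  have := hline.le_slope_of_hasDerivAt (x := 0) (y := 1) (by simpa using hx) (by simpa using hy)
    zero_lt_one hderiv
  simp only [slope_def_field, Function.comp_apply, AffineMap.lineMap_apply_zero,
    AffineMap.lineMap_apply_one, sub_zero, div_one] at this
  linarith

theorem DifferentiableAt.exists_dist_gradient_lt_of_approx_subgradient {φ : E → ℝ} {x : E}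
    (hφ : DifferentiableAt ℝ φ x) {U : Set E} (hU : U ∈ 𝓝 x) {ε : ℝ} (hε : 0 < ε) :
    ∃ η > 0, ∀ y, (∀ z ∈ U, ⟪y, z - x⟫ ≤ φ z - φ x + η) → ‖y - gradient φ x‖ < ε := by
  set v := gradient φ x
  have hlin : ∀ᶠ z in 𝓝 x, z ∈ U ∧ ‖φ z - φ x - ⟪v, z - x⟫‖ ≤ ε / 2 * ‖z - x‖ :=
    Filter.Eventually.and hU ((hasGradientAt_iff_isLittleO.1 hφ.hasGradientAt).def (by positivity))
  obtain ⟨r, hr, hball⟩ := Metric.eventually_nhds_iff.1 hlin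
  refine ⟨r * ε / 8, by positivity, fun y hy => ?_⟩
  by_contra! hfar
  have hw : 0 < ‖y - v‖ := hε.trans_le hfar
  -- test the approximate subgradient inequality in the direction `y - v`, at distance `r / 2`
  set h := (r / 2 / ‖y - v‖) • (y - v)
  have hh : ‖h‖ = r / 2 := by
    rw [norm_smul, Real.norm_of_nonneg (by positivity), div_mul_cancel₀ _ hw.ne']
  have hinner : ⟪y - v, h⟫ = r / 2 * ‖y - v‖ := by
    rw [real_inner_smul_right, real_inner_self_eq_norm_sq]
    field_simp
  obtain ⟨hzU, hzlin⟩ := hball (y := x + h) (by simp [dist_eq_norm, hh, hr])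
  have hsub := hy (x + h) hzU
  simp only [add_sub_cancel_left, hh] at hsub hzlin
  have hupper := (abs_le.1 (Real.norm_eq_abs _ ▸ hzlin)).2
  rw [inner_sub_left] at hinner
  nlinarith [mul_le_mul_of_nonneg_left hfar (by positivity : (0 : ℝ) ≤ r / 2)]

theorem LocallyLipschitzOn.tendsto_add_inner_gradient {U : Set E} {φ : E → ℝ} (hU : IsOpen U)
    (hφ : LocallyLipschitzOn U φ) {x : E} (hx : x ∈ U) :
    Tendsto (fun z => φ z + ⟪gradient φ z, x - z⟫) (𝓝 x) (𝓝 (φ x)) := by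
  obtain ⟨K, t, ht, hK⟩ := hφ hx
  rw [hU.nhdsWithin_eq hx] at ht
  have hbound : ∀ᶠ z in 𝓝 x, ‖⟪gradient φ z, x - z⟫‖ ≤ K * ‖x - z‖ := by
    filter_upwards [eventually_mem_nhds_iff.2 ht] with z hz
    have hgrad : ‖gradient φ z‖ ≤ K := by
      rw [gradient, LinearIsometryEquiv.norm_map]
      exact norm_fderiv_le_of_lipschitzOn ℝ hz hK
    calc ‖⟪gradient φ z, x - z⟫‖ ≤ ‖gradient φ z‖ * ‖x - z‖ := norm_inner_le_norm _ _
      _ ≤ K * ‖x - z‖ := by gcongr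
  have hsmall : Tendsto (fun z => K * ‖x - z‖) (𝓝 x) (𝓝 0) := by
    simpa using (show Continuous fun z : E => (K : ℝ) * ‖x - z‖ by fun_prop).tendsto x
  simpa using (hφ.continuousOn.continuousAt (hU.mem_nhds hx)).tendsto.add
    (squeeze_zero_norm' hbound hsmall)

end Calculus

section Rademacher

variable {E : Type*} [NormedAddCommGroup E] [NormedSpace ℝ E] [FiniteDimensional ℝ E]

theorem LipschitzWith.dense_differentiableAt {f : E → ℝ} {K : NNReal} (hf : LipschitzWith K f) :
    Dense {x | DifferentiableAt ℝ f x} := by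
  let _ : MeasurableSpace E := borel E
  have _ : BorelSpace E := ⟨rfl⟩
  exact MeasureTheory.Measure.dense_of_ae
    (hf.ae_differentiableAt (μ := (Module.finBasis ℝ E).addHaar))

theorem LocallyLipschitzOn.subset_closure_differentiableAt {U : Set E} {f : E → ℝ}
    (hU : IsOpen U) (hf : LocallyLipschitzOn U f) :
    U ⊆ closure {x | x ∈ U ∧ DifferentiableAt ℝ f x} := by
  intro x hx
  obtain ⟨K, t, ht, hK⟩ := hf hx
  rw [hU.nhdsWithin_eq hx] at ht
  obtain ⟨g, hg, hfg⟩ := (hK.mono interior_subset).extend_real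
  rw [mem_closure_iff]
  intro o ho hxo
  obtain ⟨z, ⟨⟨hzo, hzt⟩, hzU⟩, hzg⟩ := hg.dense_differentiableAt.inter_open_nonempty
    (o ∩ interior t ∩ U) ((ho.inter isOpen_interior).inter hU)
    ⟨x, ⟨hxo, mem_interior_iff_mem_nhds.2 ht⟩, hx⟩
  exact ⟨z, hzo, hzU, hzg.congr_of_eventuallyEq
    (Filter.eventuallyEq_of_mem (isOpen_interior.mem_nhds hzt) hfg)⟩

end Rademacher

theorem EReal.coe_sub_le_comm {a : ℝ} {b c : EReal} :
    (a : EReal) - b ≤ c ↔ (a : EReal) - c ≤ b := by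
  induction b using EReal.rec <;> induction c using EReal.rec <;>
    simp [EReal.sub_top, ← EReal.coe_sub]
  constructor <;> intro <;> linarith

theorem LowerSemicontinuousAt.le_of_eventually_lineMap_le {E : Type*} [AddCommGroup E]
    [Module ℝ E] [TopologicalSpace E] [IsTopologicalAddGroup E] [ContinuousSMul ℝ E]
    {g : E → EReal} {x x₀ : E} (hg : LowerSemicontinuousAt g x) {a b : ℝ}
    (h : ∀ᶠ t in 𝓝[<] (1 : ℝ), g (AffineMap.lineMap x₀ x t) ≤ ((1 - t) * a + t * b : ℝ)) :
    g x ≤ b := by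
  by_contra! hlt
  obtain ⟨c, hbc, hcg⟩ := EReal.lt_iff_exists_real_btwn.1 hlt
  have hline : Tendsto (fun t : ℝ => AffineMap.lineMap (k := ℝ) x₀ x t) (𝓝[<] 1) (𝓝 x) := by
    simpa using ((AffineMap.lineMap_continuous (R := ℝ) (p := x₀) (q := x)).tendsto 1).mono_left
      nhdsWithin_le_nhds
  have hbound : Tendsto (fun t : ℝ => (1 - t) * a + t * b) (𝓝[<] 1) (𝓝 b) := by
    simpa using ((show Continuous fun t : ℝ => (1 - t) * a + t * b by fun_prop).tendsto 1).mono_left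
      nhdsWithin_le_nhds
  obtain ⟨t, hgt, hle, hlt'⟩ := ((hline.eventually (hg c hcg)).and
    (h.and (hbound.eventually (gt_mem_nhds (EReal.coe_lt_coe_iff.1 hbc))))).exists
  exact (hgt.trans_le hle).not_ge (by exact_mod_cast hlt'.le)

section Conjugate

variable {d : ℕ} {f : Euc d → EReal}

theorem inner_sub_le_fconj (f : Euc d → EReal) (x y : Euc d) :
    ((⟪x, y⟫ : ℝ) : EReal) - f x ≤ fconj f y :=
  le_iSup (fun z => ((⟪z, y⟫ : ℝ) : EReal) - f z) x

theorem inner_sub_le_restrSup (f : Euc d → EReal) {A : Set (Euc d)} {y : Euc d} (hy : y ∈ A)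
    (x : Euc d) : ((⟪x, y⟫ : ℝ) : EReal) - fconj f y ≤ restrSup f A x :=
  le_iSup₂ (f := fun y (_ : y ∈ A) => ((⟪x, y⟫ : ℝ) : EReal) - fconj f y) y hy

theorem restrSup_le (f : Euc d → EReal) (A : Set (Euc d)) (x : Euc d) :
    restrSup f A x ≤ f x :=
  iSup₂_le fun y _ => EReal.coe_sub_le_comm.1 (inner_sub_le_fconj f x y)

theorem restrSup_lineMap_le {A : Set (Euc d)} {x₀ x : Euc d} {a b t : ℝ}
    (ha : restrSup f A x₀ ≤ a) (hb : restrSup f A x ≤ b) (ht₀ : 0 ≤ t) (ht₁ : t ≤ 1) :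
    restrSup f A (AffineMap.lineMap x₀ x t) ≤ ((1 - t) * a + t * b : ℝ) := by
  refine iSup₂_le fun y hy => ?_
  have h₀ := (inner_sub_le_restrSup f hy x₀).trans ha
  have h₁ := (inner_sub_le_restrSup f hy x).trans hb
  rw [AffineMap.lineMap_apply_module, inner_add_left, real_inner_smul_left,
    real_inner_smul_left]
  generalize fconj f y = F at h₀ h₁ ⊢
  induction F using EReal.rec with
  | bot => simp at h₀
  | top => simp [EReal.sub_top]
  | coe c =>
    norm_cast at h₀ h₁ ⊢
    nlinarith

end Conjugate

namespace ClosedConvexFun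

variable {d : ℕ} {f : Euc d → EReal}

theorem coe_toRealFun (hf : ClosedConvexFun f) {x : Euc d} (hx : x ∈ effDom f) :
    ((toRealFun f x : ℝ) : EReal) = f x :=
  EReal.coe_toReal hx (hf.2.1 x)

theorem convexOn_toRealFun (hf : ClosedConvexFun f) : ConvexOn ℝ (effDom f) (toRealFun f) := by
  have key : ∀ x ∈ effDom f, ∀ y ∈ effDom f, ∀ a b : ℝ, 0 ≤ a → 0 ≤ b → a + b = 1 →
      f (a • x + b • y) ≤ ((a * toRealFun f x + b * toRealFun f y : ℝ) : EReal) := by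
    intro x hx y hy a b ha hb hab
    have h := hf.2.2.2 x y a b ha hb hab
    rwa [← hf.coe_toRealFun hx, ← hf.coe_toRealFun hy] at h
  refine ⟨fun x hx y hy a b ha hb hab => ?_, fun x hx y hy a b ha hb hab => ?_⟩
  · exact ne_top_of_le_ne_top (EReal.coe_ne_top _) (key x hx y hy a b ha hb hab)
  · have h := EReal.toReal_le_toReal (key x hx y hy a b ha hb hab) (hf.2.1 _) (EReal.coe_ne_top _)
    rwa [EReal.toReal_coe] at h

theorem add_inner_gradient_le (hf : ClosedConvexFun f) {z : Euc d} (hz : z ∈ domGrad f)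
    (w : Euc d) :
    ((toRealFun f z + ⟪gradient (toRealFun f) z, w - z⟫ : ℝ) : EReal) ≤ f w := by
  by_cases hw : w ∈ effDom f
  · rw [← hf.coe_toRealFun hw, EReal.coe_le_coe_iff]
    exact hf.convexOn_toRealFun.add_inner_gradient_le (interior_subset hz.1) hw hz.2
  · rw [show f w = ⊤ from not_not.1 hw]
    exact le_top

theorem fconj_gradient_le (hf : ClosedConvexFun f) {z : Euc d} (hz : z ∈ domGrad f) :
    fconj f (gradient (toRealFun f) z) ≤
      ((⟪z, gradient (toRealFun f) z⟫ - toRealFun f z : ℝ) : EReal) := by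
  refine iSup_le fun w => EReal.coe_sub_le_comm.1 ?_
  refine le_trans (le_of_eq ?_) (hf.add_inner_gradient_le hz w)
  rw [← EReal.coe_sub, inner_sub_right, real_inner_comm w, real_inner_comm z]
  ring_nf

theorem le_restrSup_of_mem_domGrad (hf : ClosedConvexFun f) {A : Set (Euc d)} {z : Euc d}
    (hz : z ∈ domGrad f) (hzA : gradient (toRealFun f) z ∈ A) (x : Euc d) :
    ((toRealFun f z + ⟪gradient (toRealFun f) z, x - z⟫ : ℝ) : EReal) ≤ restrSup f A x := by
  refine le_trans (le_of_eq ?_)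
    ((EReal.sub_le_sub le_rfl (hf.fconj_gradient_le hz)).trans (inner_sub_le_restrSup f hzA x))
  rw [← EReal.coe_sub, inner_sub_right, real_inner_comm x, real_inner_comm z]
  ring_nf

theorem le_restrSup_of_mem_interior (hf : ClosedConvexFun f) {A : Set (Euc d)}
    (hA : gradRange f ⊆ A) {x : Euc d} (hx : x ∈ interior (effDom f)) :
    f x ≤ restrSup f A x := by
  have hφ := hf.convexOn_toRealFun.locallyLipschitzOn_interior
  have hcl : x ∈ closure (domGrad f) := hφ.subset_closure_differentiableAt isOpen_interior hx
  have := mem_closure_iff_nhdsWithin_neBot.1 hcl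
  rw [← hf.coe_toRealFun (interior_subset hx)]
  have hlim : Tendsto (fun z => ((toRealFun f z + ⟪gradient (toRealFun f) z, x - z⟫ : ℝ) : EReal))
      (𝓝[domGrad f] x) (𝓝 (toRealFun f x)) :=
    (continuous_coe_real_ereal.tendsto _).comp
      ((hφ.tendsto_add_inner_gradient isOpen_interior hx).mono_left nhdsWithin_le_nhds)
  refine le_of_tendsto hlim ?_
  filter_upwards [self_mem_nhdsWithin] with z hz
  exact hf.le_restrSup_of_mem_domGrad hz (hA ⟨z, hz, rfl⟩) x

theorem restrSup_eq_of_gradRange_subset (hf : ClosedConvexFun f)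
    (hD : (interior (effDom f)).Nonempty) {A : Set (Euc d)} (hA : gradRange f ⊆ A)
    {x : Euc d} (hx : x ∈ closure (interior (effDom f))) : restrSup f A x = f x := by
  refine le_antisymm (restrSup_le f A x) (EReal.le_of_forall_lt_iff_le.1 fun b hb => ?_)
  obtain ⟨x₀, hx₀⟩ := hD
  have hx₀A : restrSup f A x₀ ≤ (toRealFun f x₀ : EReal) :=
    (hf.coe_toRealFun (interior_subset hx₀)).symm ▸ restrSup_le f A x₀
  refine (hf.1.lowerSemicontinuousAt x).le_of_eventually_lineMap_le (x₀ := x₀)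
    (a := toRealFun f x₀) ?_
  filter_upwards [Ico_mem_nhdsLT (show (0 : ℝ) < 1 from one_pos)] with t ht
  have hxt : AffineMap.lineMap x₀ x t ∈ interior (effDom f) := by
    rw [AffineMap.lineMap_apply_module]
    exact hf.convexOn_toRealFun.1.combo_interior_closure_mem_interior hx₀
      (closure_mono interior_subset hx) (by linarith [ht.2]) ht.1 (by ring)
  exact (hf.le_restrSup_of_mem_interior hA hxt).trans
    (restrSup_lineMap_le hx₀A hb.le ht.1 ht.2.le)

theorem gradRange_subset_of_restrSup_eq (hf : ClosedConvexFun f) {A : Set (Euc d)}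
    (hA : IsClosed A) (h : ∀ x ∈ interior (effDom f), restrSup f A x = f x) :
    gradRange f ⊆ A := by
  rintro _ ⟨x, ⟨hxD, hdiff⟩, rfl⟩
  rw [← hA.closure_eq, Metric.mem_closure_iff]
  intro ε hε
  obtain ⟨η, hη, hnear⟩ :=
    hdiff.exists_dist_gradient_lt_of_approx_subgradient (isOpen_interior.mem_nhds hxD) hε
  have hlt : ((toRealFun f x - η : ℝ) : EReal) < restrSup f A x := by
    rw [h x hxD, ← hf.coe_toRealFun (interior_subset hxD), EReal.coe_lt_coe_iff]
    linarith
  obtain ⟨y, hyA, hy⟩ : ∃ y ∈ A, ((toRealFun f x - η : ℝ) : EReal) <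
      ((⟪x, y⟫ : ℝ) : EReal) - fconj f y := by
    simpa only [restrSup, lt_iSup_iff, exists_prop] using hlt
  refine ⟨y, hyA, ?_⟩
  rw [dist_comm, dist_eq_norm]
  refine hnear y fun z hz => ?_
  have hconj := inner_sub_le_fconj f z y
  rw [← hf.coe_toRealFun (interior_subset hz)] at hconj
  have := (add_le_add le_rfl hconj).trans_lt (EReal.add_lt_of_lt_sub hy)
  norm_cast at this
  rw [inner_sub_right, real_inner_comm z, real_inner_comm x]
  linarith

end ClosedConvexFun

/-- Lemma 4 of the paper. -/
theorem stmt6 {d : ℕ} (f : Euc d → EReal) (hf : ClosedConvexFun f)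
    (hD : (interior (effDom f)).Nonempty)
    (A : Set (Euc d)) (hA : IsClosed A) :
    ((∀ x ∈ closure (interior (effDom f)), restrSup f A x = f x) ↔
      gradRange f ⊆ A) ∧
    (∀ x ∈ closure (interior (effDom f)),
      restrSup f (closure (gradRange f)) x = f x) ∧
    (∀ B : Set (Euc d), IsClosed B →
      (∀ x ∈ closure (interior (effDom f)), restrSup f B x = f x) →
      closure (gradRange f) ⊆ B) := by
  have hsubset : ∀ {B : Set (Euc d)}, IsClosed B →
      (∀ x ∈ closure (interior (effDom f)), restrSup f B x = f x) → gradRange f ⊆ B :=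
    fun hB h => hf.gradRange_subset_of_restrSup_eq hB fun x hx => h x (subset_closure hx)
  refine ⟨⟨hsubset hA, fun hsub x hx => hf.restrSup_eq_of_gradRange_subset hD hsub hx⟩,
    fun x hx => hf.restrSup_eq_of_gradRange_subset hD subset_closure hx,
    fun B hB h => closure_minimal (hsubset hB h) hB⟩

end
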